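/- arXiv:1607.00415 — 4 statements merged into one kernel-verified Lean document; each statement's English description precedes it below -/
import Mathlib

section
/- Let A be a finite set of d×d real matrices. The following are equivalent: (1) the joint spectral radius of A is strictly less than 1; (2) there exist a norm ‖·‖ on ℝ^d and a number q < 1 such that ‖A x‖ ≤ q‖x‖ for all A ∈ A and all x ∈ ℝ^d (all operators are simultaneous contractions in this norm). -/
/-!
If `ρ < 1`, fix `ρ < r < 1`. Products of length `k` then satisfy `‖Π‖ ≤ C rᵏ`, so
`N x = sup_k sup_{Π of length k} ‖Π x‖ / rᵏ` is finite; it dominates `‖x‖` (take `k = 0`), and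
`N (A x) ≤ r N x` because `Π A` is a product of length `k + 1`.
Conversely, a norm contracted by every `A ∈ 𝒜` with ratio `q` gives `N (Π x) ≤ qᵏ N x`; since all
norms on `ℝ^d` are equivalent, `‖Π‖ ≤ D qᵏ`, whence `ρ ≤ lim D^(1/k) q = q`.
-/

open Filter

/-- The operator norm of a real `d × d` matrix induced by the sup-norm on `ℝ^d`. -/
noncomputable def mnorm {d : ℕ} (P : Matrix (Fin d) (Fin d) ℝ) : ℝ :=
  ‖LinearMap.toContinuousLinearMap (Matrix.toLin' P)‖

/-- The set of all products of `k` matrices taken from the family `𝒜`. -/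
def prodsOf {d : ℕ} (𝒜 : Set (Matrix (Fin d) (Fin d) ℝ)) (k : ℕ) :
    Set (Matrix (Fin d) (Fin d) ℝ) :=
  {P | ∃ l : List (Matrix (Fin d) (Fin d) ℝ), (∀ a ∈ l, a ∈ 𝒜) ∧ l.length = k ∧ l.prod = P}

open Matrix

section SupNormSeminorm

variable {𝕜 E F : Type*} [NormedField 𝕜] [AddCommGroup E] [Module 𝕜 E]
  [SeminormedAddCommGroup F] [NormedSpace 𝕜 F] {𝒯 : Set (E →ₗ[𝕜] F)}

noncomputable def supNormSeminorm (𝒯 : Set (E →ₗ[𝕜] F)) : Seminorm 𝕜 E :=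
  ⨆ T : 𝒯, (normSeminorm 𝕜 F).comp (T : E →ₗ[𝕜] F)

theorem supNormSeminorm_apply (h𝒯 : ∀ x, BddAbove ((fun T : E →ₗ[𝕜] F => ‖T x‖) '' 𝒯)) (x : E) :
    supNormSeminorm 𝒯 x = ⨆ T : 𝒯, ‖(T : E →ₗ[𝕜] F) x‖ := by
  refine Seminorm.iSup_apply (Seminorm.bddAbove_range_iff.2 fun y => ?_)
  simpa only [Set.image_eq_range, Seminorm.comp_apply, coe_normSeminorm] using h𝒯 y

theorem norm_apply_le_supNormSeminorm
    (h𝒯 : ∀ x, BddAbove ((fun T : E →ₗ[𝕜] F => ‖T x‖) '' 𝒯)) {T : E →ₗ[𝕜] F} (hT : T ∈ 𝒯)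
    (x : E) : ‖T x‖ ≤ supNormSeminorm 𝒯 x := by
  rw [supNormSeminorm_apply h𝒯]
  exact le_ciSup (f := fun T : 𝒯 => ‖(T : E →ₗ[𝕜] F) x‖)
    (by simpa only [Set.image_eq_range] using h𝒯 x) ⟨T, hT⟩

theorem norm_mul_supNormSeminorm_apply_le
    (h𝒯 : ∀ x, BddAbove ((fun T : E →ₗ[𝕜] F => ‖T x‖) '' 𝒯)) {A : E →ₗ[𝕜] E} {c : 𝕜}
    (hA : ∀ T ∈ 𝒯, c • T ∘ₗ A ∈ 𝒯) (x : E) :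
    ‖c‖ * supNormSeminorm 𝒯 (A x) ≤ supNormSeminorm 𝒯 x := by
  rw [← map_smul_eq_mul, ← map_smul, supNormSeminorm_apply h𝒯]
  refine Real.iSup_le (fun ⟨T, hT⟩ => ?_) (apply_nonneg _ x)
  simpa using norm_apply_le_supNormSeminorm h𝒯 (hA T hT) x

end SupNormSeminorm

section MatrixNorm

variable {d : ℕ}

theorem norm_mulVec_le_mnorm_mul (P : Matrix (Fin d) (Fin d) ℝ) (x : Fin d → ℝ) :
    ‖P *ᵥ x‖ ≤ mnorm P * ‖x‖ := by
  simpa [mnorm, Matrix.toLin'_apply] using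
    (LinearMap.toContinuousLinearMap (Matrix.toLin' P)).le_opNorm x

theorem mnorm_le_of_norm_mulVec_le {P : Matrix (Fin d) (Fin d) ℝ} {C : ℝ} (hC : 0 ≤ C)
    (h : ∀ x, ‖P *ᵥ x‖ ≤ C * ‖x‖) : mnorm P ≤ C :=
  ContinuousLinearMap.opNorm_le_bound _ hC fun x => by simpa [Matrix.toLin'_apply] using h x

theorem mnorm_nonneg (P : Matrix (Fin d) (Fin d) ℝ) : 0 ≤ mnorm P := norm_nonneg _

theorem mnorm_one_le : mnorm (1 : Matrix (Fin d) (Fin d) ℝ) ≤ 1 :=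
  mnorm_le_of_norm_mulVec_le zero_le_one fun x => by simp

theorem mnorm_mul_le (P Q : Matrix (Fin d) (Fin d) ℝ) : mnorm (P * Q) ≤ mnorm P * mnorm Q := by
  refine mnorm_le_of_norm_mulVec_le (mul_nonneg (mnorm_nonneg P) (mnorm_nonneg Q)) fun x => ?_
  rw [← Matrix.mulVec_mulVec, mul_assoc]
  exact (norm_mulVec_le_mnorm_mul P _).trans
    (mul_le_mul_of_nonneg_left (norm_mulVec_le_mnorm_mul Q x) (mnorm_nonneg P))

end MatrixNorm

section Products

variable {d : ℕ} {𝒜 : Set (Matrix (Fin d) (Fin d) ℝ)} {P A : Matrix (Fin d) (Fin d) ℝ} {k : ℕ}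

theorem mem_prodsOf_zero : P ∈ prodsOf 𝒜 0 ↔ P = 1 := by
  simp [prodsOf, eq_comm]

theorem mem_prodsOf_succ :
    P ∈ prodsOf 𝒜 (k + 1) ↔ ∃ A ∈ 𝒜, ∃ Q ∈ prodsOf 𝒜 k, P = A * Q := by
  constructor
  · rintro ⟨_ | ⟨A, l⟩, hl, hlen, rfl⟩
    · simp at hlen
    · simp only [List.mem_cons, forall_eq_or_imp] at hl
      exact ⟨A, hl.1, l.prod, ⟨l, hl.2, by simpa using hlen, rfl⟩, List.prod_cons⟩
  · rintro ⟨A, hA, Q, ⟨l, hl, rfl, rfl⟩, rfl⟩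
    exact ⟨A :: l, by simpa [hA] using hl, rfl, List.prod_cons⟩

theorem mul_mem_prodsOf_succ (hP : P ∈ prodsOf 𝒜 k) (hA : A ∈ 𝒜) :
    P * A ∈ prodsOf 𝒜 (k + 1) := by
  obtain ⟨l, hl, rfl, rfl⟩ := hP
  exact ⟨l ++ [A], by simpa [or_imp, forall_and] using ⟨hl, hA⟩, by simp, by simp⟩

theorem mnorm_le_pow_of_mem_prodsOf {B : ℝ} (hB : ∀ A ∈ 𝒜, mnorm A ≤ B)
    (hP : P ∈ prodsOf 𝒜 k) : mnorm P ≤ B ^ k := by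
  induction k generalizing P with
  | zero => simpa [mem_prodsOf_zero.1 hP] using mnorm_one_le
  | succ k ih =>
    obtain ⟨A, hA, Q, hQ, rfl⟩ := mem_prodsOf_succ.1 hP
    calc mnorm (A * Q) ≤ mnorm A * mnorm Q := mnorm_mul_le A Q
      _ ≤ B * B ^ k :=
        mul_le_mul (hB A hA) (ih hQ) (mnorm_nonneg Q) ((mnorm_nonneg A).trans (hB A hA))
      _ = B ^ (k + 1) := (pow_succ' B k).symm

theorem seminorm_mulVec_le_pow_mul (N : Seminorm ℝ (Fin d → ℝ)) {q : ℝ} (hq : 0 ≤ q)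
    (hN : ∀ A ∈ 𝒜, ∀ x, N (A *ᵥ x) ≤ q * N x) (hP : P ∈ prodsOf 𝒜 k) (x : Fin d → ℝ) :
    N (P *ᵥ x) ≤ q ^ k * N x := by
  induction k generalizing P with
  | zero => simp [mem_prodsOf_zero.1 hP]
  | succ k ih =>
    obtain ⟨A, hA, Q, hQ, rfl⟩ := mem_prodsOf_succ.1 hP
    calc N ((A * Q) *ᵥ x) = N (A *ᵥ (Q *ᵥ x)) := by rw [Matrix.mulVec_mulVec]
      _ ≤ q * N (Q *ᵥ x) := hN A hA _
      _ ≤ q * (q ^ k * N x) := mul_le_mul_of_nonneg_left (ih hQ) hq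
      _ = q ^ (k + 1) * N x := by ring

end Products

section ScaledProducts

variable {d : ℕ} {𝒜 : Set (Matrix (Fin d) (Fin d) ℝ)} {r C : ℝ}

def scaledProds (𝒜 : Set (Matrix (Fin d) (Fin d) ℝ)) (r : ℝ) :
    Set ((Fin d → ℝ) →ₗ[ℝ] (Fin d → ℝ)) :=
  {T | ∃ k, ∃ P ∈ prodsOf 𝒜 k, T = (r ^ k)⁻¹ • Matrix.toLin' P}

theorem bddAbove_norm_apply_scaledProds (hr : 0 < r)
    (hC : ∀ k, ∀ P ∈ prodsOf 𝒜 k, mnorm P ≤ C * r ^ k) (x : Fin d → ℝ) :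
    BddAbove ((fun T : (Fin d → ℝ) →ₗ[ℝ] (Fin d → ℝ) => ‖T x‖) '' scaledProds 𝒜 r) := by
  refine ⟨C * ‖x‖, ?_⟩
  rintro _ ⟨_, ⟨k, P, hP, rfl⟩, rfl⟩
  have hrk : 0 < r ^ k := pow_pos hr k
  calc ‖((r ^ k)⁻¹ • Matrix.toLin' P) x‖ = ‖P *ᵥ x‖ / r ^ k := by
        rw [LinearMap.smul_apply, Matrix.toLin'_apply, norm_smul, norm_inv,
          Real.norm_of_nonneg hrk.le, inv_mul_eq_div]
    _ ≤ C * r ^ k * ‖x‖ / r ^ k := by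
        gcongr
        exact (norm_mulVec_le_mnorm_mul P x).trans (by gcongr; exact hC k P hP)
    _ = C * ‖x‖ := by field_simp

theorem norm_le_supNormSeminorm_scaledProds (hr : 0 < r)
    (hC : ∀ k, ∀ P ∈ prodsOf 𝒜 k, mnorm P ≤ C * r ^ k) (x : Fin d → ℝ) :
    ‖x‖ ≤ supNormSeminorm (scaledProds 𝒜 r) x := by
  have hid : LinearMap.id ∈ scaledProds 𝒜 r :=
    ⟨0, 1, mem_prodsOf_zero.2 rfl, by simp [Matrix.toLin'_one]⟩
  simpa using norm_apply_le_supNormSeminorm (bddAbove_norm_apply_scaledProds hr hC) hid x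

theorem supNormSeminorm_scaledProds_mulVec_le (hr : 0 < r)
    (hC : ∀ k, ∀ P ∈ prodsOf 𝒜 k, mnorm P ≤ C * r ^ k) {A : Matrix (Fin d) (Fin d) ℝ}
    (hA : A ∈ 𝒜) (x : Fin d → ℝ) :
    supNormSeminorm (scaledProds 𝒜 r) (A *ᵥ x) ≤ r * supNormSeminorm (scaledProds 𝒜 r) x := by
  have hclosed : ∀ T ∈ scaledProds 𝒜 r, r⁻¹ • T ∘ₗ Matrix.toLin' A ∈ scaledProds 𝒜 r := by
    rintro _ ⟨k, P, hP, rfl⟩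
    refine ⟨k + 1, P * A, mul_mem_prodsOf_succ hP hA, ?_⟩
    rw [Matrix.toLin'_mul, LinearMap.smul_comp, smul_smul, pow_succ, mul_inv, mul_comm]
  have h := norm_mul_supNormSeminorm_apply_le (bddAbove_norm_apply_scaledProds hr hC) hclosed x
  rw [Matrix.toLin'_apply, Real.norm_of_nonneg (inv_nonneg.2 hr.le), inv_mul_le_iff₀ hr] at h
  exact h

end ScaledProducts

theorem Seminorm.exists_pos_mul_norm_le {E : Type*} [NormedAddCommGroup E] [NormedSpace ℝ E]
    [FiniteDimensional ℝ E] (N : Seminorm ℝ E) (hN : ∀ x, x ≠ 0 → 0 < N x) :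
    ∃ c > 0, ∀ x, c * ‖x‖ ≤ N x := by
  rcases subsingleton_or_nontrivial E with hE | hE
  · exact ⟨1, one_pos, fun x => by simp [Subsingleton.elim x 0]⟩
  -- `N` attains a positive minimum on the compact unit sphere.
  obtain ⟨x₀, hx₀, hmin⟩ := (isCompact_sphere (0 : E) 1).exists_isMinOn
    (NormedSpace.sphere_nonempty.2 zero_le_one) N.convexOn.locallyLipschitz.continuous.continuousOn
  refine ⟨N x₀, hN x₀ (ne_zero_of_mem_unit_sphere ⟨x₀, hx₀⟩), fun x => ?_⟩
  rcases eq_or_ne x 0 with rfl | hx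
  · simp
  have hxpos : 0 < ‖x‖ := norm_pos_iff.2 hx
  have h := isMinOn_iff.1 hmin (‖x‖⁻¹ • x) (mem_sphere_zero_iff_norm.2 (norm_smul_inv_norm hx))
  rw [map_smul_eq_mul, norm_inv, norm_norm, inv_mul_eq_div, le_div_iff₀ hxpos] at h
  exact h

theorem exists_mnorm_le_mul_pow_of_seminorm_mulVec_le {d : ℕ}
    {𝒜 : Set (Matrix (Fin d) (Fin d) ℝ)} (N : Seminorm ℝ (Fin d → ℝ))
    (hN : ∀ x, x ≠ 0 → 0 < N x) {q : ℝ} (hq : 0 ≤ q)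
    (hcontr : ∀ A ∈ 𝒜, ∀ x, N (A *ᵥ x) ≤ q * N x) :
    ∃ D > 0, ∀ k, ∀ P ∈ prodsOf 𝒜 k, mnorm P ≤ D * q ^ k := by
  obtain ⟨c, hc, hlower⟩ := N.exists_pos_mul_norm_le hN
  obtain ⟨C, hC, hupper⟩ :=
    N.bound_of_continuous_normedSpace N.convexOn.locallyLipschitz.continuous
  refine ⟨C / c, div_pos hC hc, fun k P hP =>
    mnorm_le_of_norm_mulVec_le (by positivity) fun x => ?_⟩
  calc ‖P *ᵥ x‖ ≤ N (P *ᵥ x) / c := (le_div_iff₀' hc).2 (hlower _)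
    _ ≤ q ^ k * (C * ‖x‖) / c := by
        gcongr
        exact (seminorm_mulVec_le_pow_mul N hq hcontr hP x).trans (by gcongr; exact hupper x)
    _ = C / c * q ^ k * ‖x‖ := by ring

section JointSpectralRadius

variable {d : ℕ} {𝒜 : Set (Matrix (Fin d) (Fin d) ℝ)} {ρ : ℝ}

/-- At `k = 0` the exponent `1 / k` is the junk value `0`, so only `k ≠ 0` carries information. -/
noncomputable def jsrSeq (𝒜 : Set (Matrix (Fin d) (Fin d) ℝ)) (k : ℕ) : ℝ :=
  sSup ((fun P => mnorm P ^ ((1 : ℝ) / k)) '' prodsOf 𝒜 k)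

theorem jsrSeq_nonneg (k : ℕ) : 0 ≤ jsrSeq 𝒜 k :=
  Real.sSup_nonneg <| Set.forall_mem_image.2 fun P _ => Real.rpow_nonneg (mnorm_nonneg P) _

theorem mnorm_le_pow_of_jsrSeq_le (h𝒜 : BddAbove (mnorm '' 𝒜)) {k : ℕ} (hk : k ≠ 0) {r : ℝ}
    (hr : jsrSeq 𝒜 k ≤ r) {P : Matrix (Fin d) (Fin d) ℝ} (hP : P ∈ prodsOf 𝒜 k) :
    mnorm P ≤ r ^ k := by
  obtain ⟨B, hB⟩ := h𝒜
  have hbdd : BddAbove ((fun P => mnorm P ^ ((1 : ℝ) / k)) '' prodsOf 𝒜 k) :=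
    ⟨(B ^ k) ^ ((1 : ℝ) / k), Set.forall_mem_image.2 fun Q hQ =>
      Real.rpow_le_rpow (mnorm_nonneg Q)
        (mnorm_le_pow_of_mem_prodsOf (fun A hA => hB ⟨A, hA, rfl⟩) hQ) (by positivity)⟩
  have hroot : mnorm P ^ ((k : ℝ)⁻¹) ≤ r := by
    rw [← one_div]
    exact (le_csSup hbdd ⟨P, hP, rfl⟩).trans hr
  rw [Real.rpow_inv_le_iff_of_pos (mnorm_nonneg P) ((jsrSeq_nonneg k).trans hr)
    (by positivity), Real.rpow_natCast] at hroot
  exact hroot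

theorem eventually_mnorm_le_pow (h𝒜 : BddAbove (mnorm '' 𝒜))
    (hρ : Tendsto (jsrSeq 𝒜) atTop (nhds ρ)) {r : ℝ} (hρr : ρ < r) :
    ∀ᶠ k in atTop, ∀ P ∈ prodsOf 𝒜 k, mnorm P ≤ r ^ k := by
  filter_upwards [hρ.eventually_lt_const hρr, eventually_ne_atTop 0] with k hk hk0
  exact fun P hP => mnorm_le_pow_of_jsrSeq_le h𝒜 hk0 hk.le hP

theorem exists_mnorm_le_mul_pow (h𝒜 : BddAbove (mnorm '' 𝒜)) {r : ℝ} (hr : 0 < r)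
    (hev : ∀ᶠ k in atTop, ∀ P ∈ prodsOf 𝒜 k, mnorm P ≤ r ^ k) :
    ∃ C, ∀ k, ∀ P ∈ prodsOf 𝒜 k, mnorm P ≤ C * r ^ k := by
  obtain ⟨B, hB⟩ := h𝒜
  obtain ⟨K, hK⟩ := eventually_atTop.1 hev
  set b := max 1 (max B 0 / r)
  have hb : 1 ≤ b := le_max_left _ _
  refine ⟨b ^ K, fun k P hP => ?_⟩
  rcases le_or_gt K k with hKk | hkK
  · exact (hK k hKk P hP).trans (le_mul_of_one_le_left (by positivity) (one_le_pow₀ hb))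
  -- the finitely many lengths `k < K` are handled by the crude bound `‖P‖ ≤ (max B 0) ^ k`
  calc mnorm P ≤ max B 0 ^ k :=
        mnorm_le_pow_of_mem_prodsOf (fun A hA => (hB ⟨A, hA, rfl⟩).trans (le_max_left _ _)) hP
    _ = (max B 0 / r) ^ k * r ^ k := by rw [div_pow, div_mul_cancel₀ _ (by positivity)]
    _ ≤ b ^ k * r ^ k := by gcongr; exact le_max_right _ _
    _ ≤ b ^ K * r ^ k := by gcongr

theorem le_of_tendsto_jsrSeq (hρ : Tendsto (jsrSeq 𝒜) atTop (nhds ρ)) {D s : ℝ} (hD : 0 < D)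
    (hs : 0 ≤ s) (h : ∀ k, ∀ P ∈ prodsOf 𝒜 k, mnorm P ≤ D * s ^ k) : ρ ≤ s := by
  have hlim : Tendsto (fun k : ℕ => D ^ ((1 : ℝ) / k) * s) atTop (nhds s) := by
    simpa using ((Real.continuousAt_const_rpow hD.ne').tendsto.comp
      tendsto_one_div_atTop_nhds_zero_nat).mul_const s
  refine le_of_tendsto_of_tendsto hρ hlim ?_
  filter_upwards [eventually_ne_atTop 0] with k hk
  refine Real.sSup_le (Set.forall_mem_image.2 fun P hP => ?_) (by positivity)
  calc mnorm P ^ ((1 : ℝ) / k) ≤ (D * s ^ k) ^ ((1 : ℝ) / k) :=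
        Real.rpow_le_rpow (mnorm_nonneg P) (h k P hP) (by positivity)
    _ = D ^ ((1 : ℝ) / k) * s := by
        rw [Real.mul_rpow hD.le (by positivity), ← Real.rpow_natCast, ← Real.rpow_mul hs,
          mul_one_div_cancel (by exact_mod_cast hk), Real.rpow_one]

end JointSpectralRadius

/-- **Simultaneous contractibility criterion.** For a finite family `𝒜` of `d × d` real matrices
with joint spectral radius `ρ = lim_k max ‖Π‖^(1/k)`, one has `ρ < 1` if and only if there exist
a norm `N` on `ℝ^d` and a number `q < 1` such that `N (A x) ≤ q * N x` for all `A ∈ 𝒜` and all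
`x ∈ ℝ^d`. -/
theorem jsr_lt_one_iff_contractions {d : ℕ} (𝒜 : Set (Matrix (Fin d) (Fin d) ℝ))
    (hfin : 𝒜.Finite) (ρ : ℝ)
    (hρ : Tendsto (fun k : ℕ => sSup ((fun P => mnorm P ^ ((1 : ℝ) / k)) '' prodsOf 𝒜 k))
      atTop (nhds ρ)) :
    ρ < 1 ↔ ∃ (N : Seminorm ℝ (Fin d → ℝ)) (q : ℝ), q < 1 ∧ (∀ x, x ≠ 0 → 0 < N x) ∧
      ∀ A ∈ 𝒜, ∀ x : Fin d → ℝ, N (A.mulVec x) ≤ q * N x := by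
  change Tendsto (jsrSeq 𝒜) atTop (nhds ρ) at hρ
  constructor
  · intro hρ1
    obtain ⟨r, hρr, hr1⟩ := exists_between hρ1
    have hr : 0 < r := (ge_of_tendsto' hρ jsrSeq_nonneg).trans_lt hρr
    have h𝒜 : BddAbove (mnorm '' 𝒜) := (hfin.image mnorm).bddAbove
    obtain ⟨C, hC⟩ := exists_mnorm_le_mul_pow h𝒜 hr (eventually_mnorm_le_pow h𝒜 hρ hρr)
    refine ⟨supNormSeminorm (scaledProds 𝒜 r), r, hr1, fun x hx => ?_,
      fun A hA => supNormSeminorm_scaledProds_mulVec_le hr hC hA⟩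
    exact (norm_pos_iff.2 hx).trans_le (norm_le_supNormSeminorm_scaledProds hr hC x)
  · rintro ⟨N, q, hq1, hN, hcontr⟩
    have hcontr' : ∀ A ∈ 𝒜, ∀ x, N (A *ᵥ x) ≤ max q 0 * N x := fun A hA x =>
      (hcontr A hA x).trans (by gcongr; exact le_max_left q 0)
    obtain ⟨D, hD, hDq⟩ :=
      exists_mnorm_le_mul_pow_of_seminorm_mulVec_le N hN (le_max_right q 0) hcontr'
    exact (le_of_tendsto_jsrSeq hρ hD (le_max_right q 0) hDq).trans_lt (max_lt hq1 one_pos)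
end

section
/- Let A be a finite irreducible family of d×d real matrices with joint spectral radius 1, equipped with a Barabanov norm ‖·‖. Then for every ε > 0 there exists a finite product Π of matrices from A with spectralRadius(Π) > 1 − ε. -/
open Filter

/-- The spectral radius of a real matrix: the maximal modulus of its (complex) eigenvalues. -/
noncomputable def specRad {d : ℕ} (P : Matrix (Fin d) (Fin d) ℝ) : ℝ :=
  sSup ((fun z : ℂ => ‖z‖) '' spectrum ℂ (P.map (fun a => (a : ℂ))))

/-!
Start from any `x₀ ≠ 0` and repeatedly apply a matrix of `𝒜` at which the Barabanov maximum
is attained: the orbit stays on the sphere `N x = N x₀`, which is compact, so two of its points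
`x_m, x_n` (`m < n`) are `δ`-close, and `x_n = Π x_m` for a product `Π` of matrices of `𝒜`.
Every such product is `N`-contractive, so its entries are bounded uniformly in the length.
If `specRad Π ≤ 1 - ε`, every eigenvalue of `1 - Π` has modulus at least `ε`, so
`|det (1 - Π)| ≥ ε ^ d`, and Cramer's rule turns this into `ε ^ d ‖x_m‖ ≤ B ‖x_m - Π x_m‖ < B δ`
with `B` independent of `Π`, which is absurd for small `δ`.
-/

open Matrix

section SeminormEquivalence

variable {E : Type*} [NormedAddCommGroup E] [NormedSpace ℝ E] [FiniteDimensional ℝ E]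

theorem Seminorm.continuous_of_finiteDimensional (N : Seminorm ℝ E) : Continuous N :=
  continuousOn_univ.mp (N.convexOn.continuousOn isOpen_univ)

theorem Seminorm.exists_le_mul_norm (N : Seminorm ℝ E) : ∃ C, 0 < C ∧ ∀ x, N x ≤ C * ‖x‖ :=
  N.bound_of_continuous_normedSpace N.continuous_of_finiteDimensional

theorem Seminorm.exists_mul_norm_le (N : Seminorm ℝ E) (hN : ∀ x, x ≠ 0 → 0 < N x) :
    ∃ c, 0 < c ∧ ∀ x, c * ‖x‖ ≤ N x := by
  cases subsingleton_or_nontrivial E with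
  | inl _ => exact ⟨1, one_pos, fun x => by simp [Subsingleton.elim x 0]⟩
  | inr _ =>
    obtain ⟨z, hz, hmin⟩ := (isCompact_sphere (0 : E) 1).exists_isMinOn
      (NormedSpace.sphere_nonempty.mpr zero_le_one)
      N.continuous_of_finiteDimensional.continuousOn
    have hz0 : z ≠ 0 := ne_zero_of_mem_unit_sphere ⟨z, hz⟩
    refine ⟨N z, hN z hz0, fun x => ?_⟩
    rcases eq_or_ne x 0 with rfl | hx
    · simp
    have hx' : 0 < ‖x‖ := norm_pos_iff.mpr hx
    have hu : ‖x‖⁻¹ • x ∈ Metric.sphere (0 : E) 1 := by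
      simp [norm_smul, hx'.ne']
    have := isMinOn_iff.mp hmin _ hu
    rw [map_smul_eq_mul, norm_inv, norm_norm] at this
    calc N z * ‖x‖ ≤ ‖x‖⁻¹ * N x * ‖x‖ := by gcongr
      _ = N x := by field_simp

end SeminormEquivalence

theorem exists_lt_dist_lt_of_isBounded {X : Type*} [PseudoMetricSpace X] [ProperSpace X]
    {x : ℕ → X} (hx : Bornology.IsBounded (Set.range x)) {δ : ℝ} (hδ : 0 < δ) :
    ∃ m n, m < n ∧ dist (x n) (x m) < δ := by
  obtain ⟨b, -, φ, hφ, hconv⟩ := tendsto_subseq_of_bounded hx (Set.mem_range_self ·)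
  obtain ⟨K, hK⟩ := Metric.cauchySeq_iff'.mp hconv.cauchySeq δ hδ
  exact ⟨φ K, φ (K + 1), hφ K.lt_succ_self, hK (K + 1) K.le_succ⟩

section MatrixBounds

variable {n : Type*} [Fintype n]

theorem Matrix.norm_mulVec_le_of_abs_le {M : Matrix n n ℝ} {L : ℝ} (hL : 0 ≤ L)
    (hM : ∀ i j, |M i j| ≤ L) (v : n → ℝ) : ‖M *ᵥ v‖ ≤ Fintype.card n * L * ‖v‖ := by
  refine (pi_norm_le_iff_of_nonneg (by positivity)).mpr fun i => ?_
  calc ‖(M *ᵥ v) i‖ = |∑ j, M i j * v j| := rfl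
    _ ≤ ∑ j, |M i j| * |v j| := by
          simpa only [abs_mul] using Finset.abs_sum_le_sum_abs (fun j => M i j * v j) .univ
    _ ≤ ∑ _j : n, L * ‖v‖ := by
        gcongr with j
        exacts [hM i j, norm_le_pi_norm v j]
    _ = Fintype.card n * L * ‖v‖ := by simp [mul_assoc]

/-- Cramer's rule `det M • v = adj M *ᵥ (M *ᵥ v)`, with the entries of `adj M` bounded as
minors of `M`. -/
theorem Matrix.abs_det_mul_norm_le [DecidableEq n] {M : Matrix n n ℝ} {L : ℝ} (hL : 1 ≤ L)
    (hM : ∀ i j, |M i j| ≤ L) (v : n → ℝ) :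
    |M.det| * ‖v‖ ≤ Fintype.card n * (Fintype.card n).factorial * L ^ Fintype.card n *
      ‖M *ᵥ v‖ := by
  have hadj : ∀ i j, |M.adjugate i j| ≤ (Fintype.card n).factorial * L ^ Fintype.card n := by
    intro i j
    rw [adjugate_apply, ← nsmul_eq_mul]
    refine det_le (abv := AbsoluteValue.abs) fun k l => ?_
    rw [updateRow_apply]
    split_ifs
    · rw [Pi.single_apply]
      split_ifs <;> simp [hL, zero_le_one.trans hL]
    · exact hM k l
  calc |M.det| * ‖v‖ = ‖M.adjugate *ᵥ (M *ᵥ v)‖ := by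
        rw [mulVec_mulVec, adjugate_mul, smul_mulVec, one_mulVec, norm_smul, Real.norm_eq_abs]
    _ ≤ _ := norm_mulVec_le_of_abs_le (by positivity) hadj _
    _ = _ := by ring

end MatrixBounds

theorem pow_le_abs_det_one_sub_of_specRad_le {d : ℕ} {P : Matrix (Fin d) (Fin d) ℝ} {ε : ℝ}
    (hε : 0 ≤ ε) (hP : specRad P ≤ 1 - ε) : ε ^ d ≤ |(1 - P).det| := by
  set Pc := P.map (fun a => (a : ℂ))
  have hspec : ∀ μ ∈ spectrum ℂ Pc, ‖μ‖ ≤ 1 - ε := fun μ hμ =>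
    (le_csSup ((Pc.finite_spectrum.image _).bddAbove) ⟨μ, hμ, rfl⟩).trans hP
  -- the roots of the characteristic polynomial of `1 - Pc` are the `1 - μ`, `μ ∈ spectrum ℂ Pc`
  have hroots : ∀ z ∈ (1 - Pc).charpoly.roots, ε ≤ ‖z‖ := by
    intro z hz
    have hz : z ∈ spectrum ℂ (algebraMap ℂ _ 1 - Pc) := by
      rw [map_one, mem_spectrum_iff_isRoot_charpoly]
      exact Polynomial.isRoot_of_mem_roots hz
    obtain ⟨_, rfl, μ, hμ, rfl⟩ := (spectrum.singleton_sub_eq (R := ℂ) Pc 1).symm ▸ hz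
    linarith [norm_sub_norm_le (1 : ℂ) μ, norm_one (α := ℂ), hspec μ hμ]
  have hcard : Multiset.card (1 - Pc).charpoly.roots = d := by
    rw [(Polynomial.splits_iff_card_roots (f := (1 - Pc).charpoly)).mp (IsAlgClosed.splits _),
      charpoly_natDegree_eq_dim, Fintype.card_fin]
  calc ε ^ d = ((1 - Pc).charpoly.roots.map fun _ => ε).prod := by simp [hcard]
    _ ≤ ((1 - Pc).charpoly.roots.map fun z => ‖z‖).prod :=
        Multiset.prod_map_le_prod_map₀ _ _ (fun _ _ => hε) hroots
    _ = ‖(1 - Pc).det‖ := by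
        rw [det_eq_prod_roots_charpoly]
        exact (map_multiset_prod (normHom : ℂ →*₀ ℝ) _).symm
    _ = |(1 - P).det| := by
        rw [show 1 - Pc = Complex.ofRealHom.mapMatrix (1 - P) by simp [Pc, Matrix.map_sub]; rfl,
          ← RingHom.map_det, Complex.ofRealHom_eq_coe, Complex.norm_real, Real.norm_eq_abs]

theorem pow_mul_norm_le_of_specRad_le {d : ℕ} {P : Matrix (Fin d) (Fin d) ℝ} {ε K : ℝ}
    (hε : 0 ≤ ε) (hK : 0 ≤ K) (hP : specRad P ≤ 1 - ε) (hPK : ∀ i j, |P i j| ≤ K)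
    (v : Fin d → ℝ) : ε ^ d * ‖v‖ ≤ d * d.factorial * (1 + K) ^ d * ‖v - P *ᵥ v‖ := by
  have hentries : ∀ i j, |(1 - P) i j| ≤ 1 + K := fun i j =>
    (abs_sub _ _).trans (add_le_add (by rw [one_apply]; split_ifs <;> simp) (hPK i j))
  calc ε ^ d * ‖v‖ ≤ |(1 - P).det| * ‖v‖ := by
        gcongr
        exact pow_le_abs_det_one_sub_of_specRad_le hε hP
    _ ≤ _ := by
        simpa [sub_mulVec] using abs_det_mul_norm_le (by linarith) hentries v

section Barabanov

variable {n : Type*} [Fintype n] {𝒜 : Set (Matrix n n ℝ)} {N : Seminorm ℝ (n → ℝ)}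

theorem exists_orbit_seminorm_eq (hbar : ∀ x, ∃ A ∈ 𝒜, N (A *ᵥ x) = N x) (x₀ : n → ℝ) :
    ∃ x : ℕ → n → ℝ, (∀ k, N (x k) = N x₀) ∧ ∀ k, ∃ A ∈ 𝒜, x (k + 1) = A *ᵥ x k := by
  choose g hg𝒜 hgN using hbar
  let x : ℕ → n → ℝ := fun k => Nat.rec x₀ (fun _ y => g y *ᵥ y) k
  refine ⟨x, fun k => ?_, fun k => ⟨g (x k), hg𝒜 _, rfl⟩⟩
  induction k with
  | zero => rfl
  | succ k ih => exact (hgN _).trans ih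

variable [DecidableEq n]

theorem seminorm_list_prod_mulVec_le (h𝒜 : ∀ A ∈ 𝒜, ∀ x, N (A *ᵥ x) ≤ N x)
    {l : List (Matrix n n ℝ)} (hl : ∀ a ∈ l, a ∈ 𝒜) (x : n → ℝ) : N (l.prod *ᵥ x) ≤ N x := by
  induction l generalizing x with
  | nil => simp
  | cons a l ih =>
    rw [List.prod_cons, ← mulVec_mulVec]
    exact (h𝒜 a (hl a List.mem_cons_self) _).trans (ih (fun b hb => hl b (.tail a hb)) x)

theorem abs_apply_le_of_seminorm_mulVec_le {c C : ℝ} (hc : 0 < c)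
    (hcN : ∀ x, c * ‖x‖ ≤ N x) (hNC : ∀ x, N x ≤ C * ‖x‖) {P : Matrix n n ℝ}
    (hP : ∀ x, N (P *ᵥ x) ≤ N x) (i j : n) : |P i j| ≤ C / c := by
  rw [le_div_iff₀' hc]
  calc c * |P i j| = c * ‖(P *ᵥ Pi.single j 1) i‖ := by simp
    _ ≤ c * ‖P *ᵥ Pi.single j 1‖ := by gcongr; exact norm_le_pi_norm _ i
    _ ≤ C * ‖(Pi.single j 1 : n → ℝ)‖ := (hcN _).trans ((hP _).trans (hNC _))
    _ = C := by simp [Pi.norm_single]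

theorem exists_list_prod_mulVec_eq {x : ℕ → n → ℝ} (hx : ∀ k, ∃ A ∈ 𝒜, x (k + 1) = A *ᵥ x k)
    {m k : ℕ} (hmk : m < k) : ∃ l ≠ [], (∀ a ∈ l, a ∈ 𝒜) ∧ l.prod *ᵥ x m = x k := by
  induction k, hmk using Nat.le_induction with
  | base =>
    obtain ⟨A, hA, hxA⟩ := hx m
    exact ⟨[A], by simp, by simpa using hA, by simp [hxA]⟩
  | succ k _ ih =>
    obtain ⟨l, -, hl𝒜, hlx⟩ := ih
    obtain ⟨A, hA, hxA⟩ := hx k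
    refine ⟨A :: l, by simp, ?_, by rw [List.prod_cons, ← mulVec_mulVec, hlx, hxA]⟩
    simpa using ⟨hA, hl𝒜⟩

theorem exists_list_prod_mulVec_near (hN : ∀ x, x ≠ 0 → 0 < N x)
    (hbar : ∀ x, ∃ A ∈ 𝒜, N (A *ᵥ x) = N x) (x₀ : n → ℝ) {δ : ℝ} (hδ : 0 < δ) :
    ∃ l ≠ [], (∀ a ∈ l, a ∈ 𝒜) ∧ ∃ x, N x = N x₀ ∧ ‖x - l.prod *ᵥ x‖ < δ := by
  obtain ⟨c, hc, hcN⟩ := N.exists_mul_norm_le hN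
  obtain ⟨x, hxN, hx⟩ := exists_orbit_seminorm_eq hbar x₀
  have hbdd : Bornology.IsBounded (Set.range x) := by
    refine isBounded_iff_forall_norm_le.mpr ⟨N x₀ / c, ?_⟩
    rintro _ ⟨k, rfl⟩
    rw [le_div_iff₀' hc, ← hxN k]
    exact hcN _
  obtain ⟨m, k, hmk, hclose⟩ := exists_lt_dist_lt_of_isBounded hbdd hδ
  obtain ⟨l, hl, hl𝒜, hlx⟩ := exists_list_prod_mulVec_eq hx hmk
  exact ⟨l, hl, hl𝒜, x m, hxN m, by rwa [hlx, ← dist_eq_norm, dist_comm]⟩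

end Barabanov

theorem pos_of_tendsto_sSup_mnorm_rpow {d : ℕ} {𝒜 : Set (Matrix (Fin d) (Fin d) ℝ)}
    (hρ : Tendsto (fun k : ℕ => sSup ((fun P => mnorm P ^ ((1 : ℝ) / k)) '' prodsOf 𝒜 k))
      atTop (nhds 1)) : 0 < d := by
  refine Nat.pos_of_ne_zero fun hd => ?_
  subst hd
  have hzero : ∀ k : ℕ, 1 ≤ k →
      sSup ((fun P => mnorm P ^ ((1 : ℝ) / k)) '' prodsOf 𝒜 k) = 0 := by
    intro k hk
    have hmem : ∀ r ∈ (fun P => mnorm P ^ ((1 : ℝ) / k)) '' prodsOf 𝒜 k, r = 0 := by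
      rintro _ ⟨P, -, rfl⟩
      dsimp only
      rw [mnorm, Subsingleton.elim (LinearMap.toContinuousLinearMap (toLin' P)) 0, norm_zero,
        Real.zero_rpow (by positivity)]
    exact le_antisymm (Real.sSup_nonpos fun r hr => (hmem r hr).le)
      (Real.sSup_nonneg fun r hr => (hmem r hr).ge)
  exact one_ne_zero (tendsto_nhds_unique hρ
    (tendsto_const_nhds.congr' (eventually_atTop.mpr ⟨1, fun k hk => (hzero k hk).symm⟩)))

theorem exists_product_specRad_close_to_one_general {d : ℕ} (𝒜 : Finset (Matrix (Fin d) (Fin d) ℝ))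
    (hρ : Tendsto
      (fun k : ℕ => sSup ((fun P => mnorm P ^ ((1 : ℝ) / k)) '' prodsOf (d := d) ↑𝒜 k))
      atTop (nhds 1))
    (N : Seminorm ℝ (Fin d → ℝ)) (hpos : ∀ x, x ≠ 0 → 0 < N x)
    (hbar : ∀ x : Fin d → ℝ,
      IsGreatest ((fun A : Matrix (Fin d) (Fin d) ℝ => N (A.mulVec x)) '' ↑𝒜) (N x)) :
    ∀ ε : ℝ, 0 < ε → ∃ l : List (Matrix (Fin d) (Fin d) ℝ), l ≠ [] ∧ (∀ a ∈ l, a ∈ 𝒜) ∧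
      1 - ε < specRad l.prod := by
  intro ε hε
  have hd : 0 < d := pos_of_tendsto_sSup_mnorm_rpow hρ
  obtain ⟨c, hc, hcN⟩ := N.exists_mul_norm_le hpos
  obtain ⟨C, hC, hNC⟩ := N.exists_le_mul_norm
  set x₀ : Fin d → ℝ := Pi.single ⟨0, hd⟩ 1
  have hx₀ : 0 < N x₀ := hpos _ (by simp [x₀])
  set B : ℝ := d * d.factorial * (1 + C / c) ^ d
  set δ : ℝ := ε ^ d * (N x₀ / C) / (B + 1)
  obtain ⟨l, hl, hl𝒜, x, hxN, hclose⟩ :=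
    exists_list_prod_mulVec_near hpos (fun x => (hbar x).1) x₀ (δ := δ) (by positivity)
  refine ⟨l, hl, hl𝒜, lt_of_not_ge fun hspec => ?_⟩
  have hentries := abs_apply_le_of_seminorm_mulVec_le hc hcN hNC
    (seminorm_list_prod_mulVec_le (fun A hA x => (hbar x).2 ⟨A, hA, rfl⟩) hl𝒜)
  have hx : N x₀ / C ≤ ‖x‖ := by
    rw [div_le_iff₀' hC, ← hxN]
    exact hNC x
  have : ε ^ d * (N x₀ / C) < ε ^ d * (N x₀ / C) := calc
    ε ^ d * (N x₀ / C) ≤ ε ^ d * ‖x‖ := by gcongr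
    _ ≤ B * ‖x - l.prod *ᵥ x‖ :=
        pow_mul_norm_le_of_specRad_le hε.le (by positivity) hspec hentries x
    _ ≤ B * δ := by gcongr
    _ < (B + 1) * δ := by gcongr; linarith
    _ = ε ^ d * (N x₀ / C) := mul_div_cancel₀ _ (by positivity)
  exact lt_irrefl _ this

/-- Let `𝒜` be a finite irreducible family of `d × d` real matrices with joint spectral radius
`1`, equipped with a Barabanov norm `N` (so `max_{A ∈ 𝒜} N (A x) = N x` for all `x`). Then for
every `ε > 0` there is a finite product `Π` of matrices from `𝒜` with spectral radius
`> 1 - ε`. -/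
theorem exists_product_specRad_close_to_one {d : ℕ} (𝒜 : Finset (Matrix (Fin d) (Fin d) ℝ))
    (hne : 𝒜.Nonempty)
    (hirr : ∀ S : Submodule ℝ (Fin d → ℝ),
      (∀ A ∈ 𝒜, ∀ x ∈ S, A.mulVec x ∈ S) → S = ⊥ ∨ S = ⊤)
    (hρ : Tendsto
      (fun k : ℕ => sSup ((fun P => mnorm P ^ ((1 : ℝ) / k)) '' prodsOf (d := d) ↑𝒜 k))
      atTop (nhds 1))
    (N : Seminorm ℝ (Fin d → ℝ)) (hpos : ∀ x, x ≠ 0 → 0 < N x)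
    (hbar : ∀ x : Fin d → ℝ,
      IsGreatest ((fun A : Matrix (Fin d) (Fin d) ℝ => N (A.mulVec x)) '' ↑𝒜) (N x)) :
    ∀ ε : ℝ, 0 < ε → ∃ l : List (Matrix (Fin d) (Fin d) ℝ), l ≠ [] ∧ (∀ a ∈ l, a ∈ 𝒜) ∧
      1 - ε < specRad l.prod :=
  exists_product_specRad_close_to_one_general 𝒜 hρ N hpos hbar
end

section
/- Let Π be a d×d real matrix and x ∈ ℝ^d with ‖x‖ = 1, ‖Π‖ ≤ 1 (operator norm), and ‖(Π − I)x‖ < δ. Then for every ε > 0 there exists δ > 0 (depending only on ε) such that spectralRadius(Π) > 1 − ε. -/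
open Filter

/-! Write `A = Π - I`. Via the adjugate, `det A • x = adj A (A x)`, and the entries of `adj A` are
bounded in terms of `d` alone because `‖Π‖ ≤ 1`; hence `|det A| ≤ K ‖A x‖ < K δ`. On the other
hand `det A = ∏ (λ - 1)` over the complex eigenvalues `λ` of `Π`, and if every `|λ| ≤ 1 - ε`
then every `|λ - 1| ≥ ε`, so `|det A| ≥ ε ^ d`. Taking `δ = ε ^ d / (K + 1)` these collide. -/

open Matrix

namespace Matrix

variable {n : Type*} [Fintype n]

theorem pow_card_le_norm_det_of_forall_le_norm [DecidableEq n] (M : Matrix n n ℂ) {c : ℝ}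
    (hc : 0 ≤ c) (h : ∀ μ ∈ spectrum ℂ M, c ≤ ‖μ‖) :
    c ^ Fintype.card n ≤ ‖M.det‖ := by
  have hcard : Multiset.card M.charpoly.roots = Fintype.card n :=
    (Polynomial.splits_iff_card_roots.mp (IsAlgClosed.splits _)).trans M.charpoly_natDegree_eq_dim
  lift c to NNReal using hc
  rw [← coe_nnnorm, ← NNReal.coe_pow, NNReal.coe_le_coe, det_eq_prod_roots_charpoly, ← hcard]
  change _ ≤ nnnormHom _
  rw [map_multiset_prod, ← Multiset.card_map nnnormHom]
  refine Multiset.pow_card_le_prod fun r hr => ?_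
  obtain ⟨μ, hμ, rfl⟩ := Multiset.mem_map.mp hr
  exact_mod_cast h μ (mem_spectrum_iff_isRoot_charpoly.mpr (Polynomial.isRoot_of_mem_roots hμ))

theorem abs_adjugate_apply_le [DecidableEq n] (A : Matrix n n ℝ) {c : ℝ} (hc : 1 ≤ c)
    (hA : ∀ i j, |A i j| ≤ c) (i j : n) :
    |A.adjugate i j| ≤ (Fintype.card n).factorial * c ^ Fintype.card n := by
  rw [adjugate_apply, ← nsmul_eq_mul]
  refine det_le (abv := AbsoluteValue.abs) fun k l => ?_
  rw [updateRow_apply]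
  split_ifs
  · rcases eq_or_ne l i with rfl | hli
    · simpa using hc
    · simpa [Pi.single_eq_of_ne hli] using zero_le_one.trans hc
  · exact hA k l

theorem norm_mulVec_le_of_abs_le_s14 (A : Matrix n n ℝ) {C : ℝ} (hC : 0 ≤ C)
    (hA : ∀ i j, |A i j| ≤ C) (v : n → ℝ) : ‖A *ᵥ v‖ ≤ Fintype.card n * C * ‖v‖ := by
  refine (pi_norm_le_iff_of_nonneg (by positivity)).mpr fun i => ?_
  calc ‖(A *ᵥ v) i‖ ≤ ∑ j, ‖A i j * v j‖ := norm_sum_le _ _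
    _ ≤ ∑ _j : n, C * ‖v‖ := by
        gcongr with j
        rw [norm_mul]
        exact mul_le_mul (hA i j) (norm_le_pi_norm v j) (norm_nonneg _) hC
    _ = Fintype.card n * C * ‖v‖ := by simp [mul_assoc]

theorem abs_det_mul_norm_le_s14 [DecidableEq n] (A : Matrix n n ℝ) {c : ℝ} (hc : 1 ≤ c)
    (hA : ∀ i j, |A i j| ≤ c) (x : n → ℝ) :
    |A.det| * ‖x‖ ≤
      Fintype.card n * ((Fintype.card n).factorial * c ^ Fintype.card n) * ‖A *ᵥ x‖ := by
  have hadj : A.det • x = A.adjugate *ᵥ (A *ᵥ x) := by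
    rw [mulVec_mulVec, adjugate_mul, smul_mulVec, one_mulVec]
  rw [← Real.norm_eq_abs, ← norm_smul, hadj]
  exact norm_mulVec_le_of_abs_le_s14 _ (by positivity) (abs_adjugate_apply_le A hc hA) _

end Matrix

theorem abs_apply_le_mnorm {d : ℕ} (P : Matrix (Fin d) (Fin d) ℝ) (i j : Fin d) :
    |P i j| ≤ mnorm P := by
  have h := (LinearMap.toContinuousLinearMap (toLin' P)).le_opNorm (Pi.single j 1)
  rw [LinearMap.coe_toContinuousLinearMap', toLin'_apply, mulVec_single_one, Pi.norm_single,
    norm_one, mul_one] at h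
  exact (norm_le_pi_norm _ i).trans h

theorem norm_le_specRad {d : ℕ} (P : Matrix (Fin d) (Fin d) ℝ) {μ : ℂ}
    (hμ : μ ∈ spectrum ℂ (P.map (fun a => (a : ℂ)))) : ‖μ‖ ≤ specRad P :=
  le_csSup ((finite_spectrum _).image _).bddAbove ⟨μ, hμ, rfl⟩

theorem pow_le_abs_det_sub_one_of_specRad_le {d : ℕ} (P : Matrix (Fin d) (Fin d) ℝ) {ε : ℝ}
    (hε : 0 ≤ ε) (h : specRad P ≤ 1 - ε) : ε ^ d ≤ |(P - 1).det| := by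
  have hdet : (((P - 1).det : ℝ) : ℂ) = (P.map (fun a => (a : ℂ)) - 1).det := by
    rw [← Complex.ofRealHom_eq_coe, RingHom.map_det, map_sub, map_one]
    rfl
  calc ε ^ d = ε ^ Fintype.card (Fin d) := by rw [Fintype.card_fin]
    _ ≤ ‖(P.map (fun a => (a : ℂ)) - 1).det‖ :=
        pow_card_le_norm_det_of_forall_le_norm _ hε fun μ hμ => ?_
    _ = |(P - 1).det| := by rw [← hdet, Complex.norm_real, Real.norm_eq_abs]
  rw [← map_one (algebraMap ℂ _), ← spectrum.sub_singleton_eq, Set.mem_sub] at hμ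
  obtain ⟨ν, hν, _, rfl, rfl⟩ := hμ
  have := norm_sub_norm_le (1 : ℂ) ν
  rw [norm_sub_rev, norm_one] at this
  linarith [norm_le_specRad P hν]

/-- **Elsner's lemma.** For every `ε > 0` there is `δ > 0` (depending only on `ε` and the
dimension) such that whenever `Π` is a `d × d` real matrix and `x ∈ ℝ^d` with `‖x‖ = 1`,
`‖Π‖ ≤ 1` (operator norm), and `‖Π x − x‖ < δ`, the spectral radius of `Π` exceeds `1 − ε`. -/
theorem elsner_lemma (d : ℕ) (ε : ℝ) (hε : 0 < ε) :
    ∃ δ : ℝ, 0 < δ ∧ ∀ (P : Matrix (Fin d) (Fin d) ℝ) (x : Fin d → ℝ),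
      ‖x‖ = 1 → mnorm P ≤ 1 → ‖P.mulVec x - x‖ < δ → 1 - ε < specRad P := by
  set K : ℝ := d * (d.factorial * 2 ^ d)
  refine ⟨ε ^ d / (K + 1), by positivity, fun P x hx hP hPx => ?_⟩
  by_contra! hspec
  have hentries : ∀ i j, |(P - 1) i j| ≤ 2 := fun i j =>
    calc |(P - 1) i j| ≤ |P i j| + |(1 : Matrix (Fin d) (Fin d) ℝ) i j| := abs_sub _ _
      _ ≤ 1 + 1 := by
        gcongr
        · exact (abs_apply_le_mnorm P i j).trans hP
        · rw [one_apply]; split_ifs <;> simp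
      _ = 2 := one_add_one_eq_two
  have hupper := (P - 1).abs_det_mul_norm_le_s14 one_le_two hentries x
  rw [hx, mul_one, sub_mulVec, one_mulVec, Fintype.card_fin] at hupper
  have hlower := pow_le_abs_det_sub_one_of_specRad_le P hε.le hspec
  have hsmall : K * ‖P *ᵥ x - x‖ < ε ^ d :=
    calc K * ‖P *ᵥ x - x‖ ≤ K * (ε ^ d / (K + 1)) := by gcongr
      _ < (K + 1) * (ε ^ d / (K + 1)) := by gcongr; linarith
      _ = ε ^ d := mul_div_cancel₀ _ (by positivity)
  linarith
end

section
/- Let M₁, …, Mₙ be complete metric spaces attached to vertices of a directed multigraph G, with maps F_{ji}: M_i → M_j attached to edges, each a contraction (Lipschitz with constant q < 1, for a uniform q), with every vertex having at least one incoming edge. Then there exists a unique collection of nonempty compact sets K_i ⊆ M_i satisfying K_j = ⋃ over edges i → j of F_{ji}(K_i) for all j, provided the spaces M_i are such that the Hausdorff-metric hyperspaces are complete (e.g., the M_i are complete). -/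
/-!
The finite product `∏ v, NonemptyCompacts (M v)`, with the sup of the Hausdorff metrics, is
complete because each `M v` is. The union operator `K ↦ (⋃_{e : i → j} F e '' K i)_j` maps it to
itself (finitely many edges keep the union compact, an incoming edge at every vertex keeps it
nonempty) and is a `q`-contraction: a `q`-Lipschitz map shrinks Hausdorff distances by `q`, and
the Hausdorff distance of two unions is at most the largest distance of corresponding pieces.
Banach's fixed point theorem gives the unique invariant family.
-/

open Metric TopologicalSpace Set Function

namespace TopologicalSpace.NonemptyCompacts

theorem lipschitzWith_map {α β : Type*} [EMetricSpace α] [EMetricSpace β] {f : α → β}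
    {K : NNReal} (hf : LipschitzWith K f) :
    LipschitzWith K (NonemptyCompacts.map f hf.continuous) := by
  have approx : ∀ s t : NonemptyCompacts α, ∀ x ∈ s, ∃ y ∈ t,
      edist (f x) (f y) ≤ K * edist s t := by
    intro s t x hx
    obtain ⟨y, hy, hxy⟩ := t.isCompact.exists_infEDist_eq_edist t.nonempty x
    refine ⟨y, hy, (hf x y).trans ?_⟩
    gcongr
    exact hxy ▸ infEDist_le_hausdorffEDist_of_mem hx
  intro s t
  refine hausdorffEDist_le_of_mem_edist ?_ ?_
  · rintro _ ⟨x, hx, rfl⟩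
    obtain ⟨y, hy, hxy⟩ := approx s t x hx
    exact ⟨f y, mem_image_of_mem f hy, hxy⟩
  · rintro _ ⟨y, hy, rfl⟩
    obtain ⟨x, hx, hyx⟩ := approx t s y hy
    exact ⟨f x, mem_image_of_mem f hx, by rwa [edist_comm t] at hyx⟩

end TopologicalSpace.NonemptyCompacts

section HutchinsonOperator

variable {V E : Type*} {src tgt : E → V} {M : V → Type*} (F : ∀ e : E, M (src e) → M (tgt e))

def hutchinsonOperator (K : ∀ v, Set (M v)) (j : V) : Set (M j) :=
  {y : M j | ∃ (e : E) (h : tgt e = j), ∃ x ∈ K (src e), y = cast (congrArg M h) (F e x)}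

theorem hutchinsonOperator_eq_iUnion (K : ∀ v, Set (M v)) (j : V) :
    hutchinsonOperator F K j =
      ⋃ (e : E) (h : tgt e = j), (fun x => cast (congrArg M h) (F e x)) '' K (src e) := by
  ext y
  simp only [hutchinsonOperator, mem_ofPred_eq, mem_iUnion, mem_image, eq_comm]

theorem hutchinsonOperator_nonempty (hin : Surjective tgt) {K : ∀ v, Set (M v)}
    (hK : ∀ v, (K v).Nonempty) (j : V) : (hutchinsonOperator F K j).Nonempty := by
  obtain ⟨e, rfl⟩ := hin j
  obtain ⟨x, hx⟩ := hK (src e)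
  exact ⟨F e x, e, rfl, x, hx, rfl⟩

section Topological

variable [∀ v, TopologicalSpace (M v)]

theorem isCompact_hutchinsonOperator [Finite E] (hF : ∀ e, Continuous (F e))
    {K : ∀ v, Set (M v)} (hK : ∀ v, IsCompact (K v)) (j : V) :
    IsCompact (hutchinsonOperator F K j) := by
  rw [hutchinsonOperator_eq_iUnion]
  refine isCompact_iUnion fun e => isCompact_iUnion fun h => ?_
  subst h
  exact (hK (src e)).image (hF e)

def hutchinsonMap [Finite E] (hF : ∀ e, Continuous (F e)) (hin : Surjective tgt)
    (K : ∀ v, NonemptyCompacts (M v)) (j : V) : NonemptyCompacts (M j) :=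
  ⟨⟨hutchinsonOperator F (fun v => K v) j,
      isCompact_hutchinsonOperator F hF (fun v => (K v).isCompact) j⟩,
    hutchinsonOperator_nonempty F hin (fun v => (K v).nonempty) j⟩

theorem isFixedPt_hutchinsonMap_iff [Finite E] (hF : ∀ e, Continuous (F e))
    (hin : Surjective tgt) {K : ∀ v, NonemptyCompacts (M v)} :
    IsFixedPt (hutchinsonMap F hF hin) K ↔
      ∀ j, (K j : Set (M j)) = hutchinsonOperator F (fun v => K v) j := by
  simp only [IsFixedPt, funext_iff, SetLike.ext'_iff, eq_comm]
  rfl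

end Topological

theorem contractingWith_hutchinsonMap [∀ v, EMetricSpace (M v)] [Fintype V] [Finite E]
    {q : NNReal} (hq : q < 1) (hF : ∀ e, LipschitzWith q (F e)) (hin : Surjective tgt) :
    ContractingWith q (hutchinsonMap F (fun e => (hF e).continuous) hin) := by
  refine ⟨hq, fun K L => edist_pi_le_iff.2 fun j => ?_⟩
  change hausdorffEDist (hutchinsonOperator F (fun v => K v) j)
    (hutchinsonOperator F (fun v => L v) j) ≤ q * edist K L
  simp only [hutchinsonOperator_eq_iUnion]
  refine hausdorffEDist_iUnion_le.trans <| iSup_le fun e =>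
    hausdorffEDist_iUnion_le.trans <| iSup_le fun h => ?_
  subst h
  calc edist ((K (src e)).map (F e) (hF e).continuous) ((L (src e)).map (F e) (hF e).continuous)
      ≤ q * edist (K (src e)) (L (src e)) := NonemptyCompacts.lipschitzWith_map (hF e) _ _
    _ ≤ q * edist K L := by gcongr; exact edist_le_pi_edist K L (src e)

end HutchinsonOperator

/-- **Graph-directed Hutchinson fixed point theorem.** Let complete, nonempty metric spaces
`M v` be attached to the vertices of a directed multigraph with finitely many edges, and let a
map `F e : M (src e) → M (tgt e)` be attached to each edge, each Lipschitz with a uniform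
constant `q < 1`. If every vertex has at least one incoming edge, then there is a unique
collection of nonempty compact sets `K v ⊆ M v` with
`K j = ⋃_{e : tgt e = j} F e '' K (src e)` for every `j`. -/
theorem graph_directed_hutchinson {V : Type*} {E : Type*} [Fintype E]
    (src tgt : E → V) (M : V → Type*) [∀ v, MetricSpace (M v)] [∀ v, CompleteSpace (M v)]
    [∀ v, Nonempty (M v)]
    (F : ∀ e : E, M (src e) → M (tgt e)) (q : NNReal) (hq : q < 1)
    (hF : ∀ e, LipschitzWith q (F e)) (hin : ∀ v : V, ∃ e : E, tgt e = v) :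
    ∃! K : ∀ v, Set (M v),
      (∀ v, IsCompact (K v) ∧ (K v).Nonempty) ∧
      ∀ j : V, K j = {y : M j | ∃ (e : E) (h : tgt e = j), ∃ x ∈ K (src e),
        y = cast (congrArg M h) (F e x)} := by
  have : Finite V := .of_surjective tgt hin
  have := Fintype.ofFinite V
  have hT := contractingWith_hutchinsonMap F hq hF hin
  have hfix := (isFixedPt_hutchinsonMap_iff F _ hin).1 hT.fixedPoint_isFixedPt
  refine ⟨fun v => hT.fixedPoint _ v,
    ⟨fun v => ⟨(hT.fixedPoint _ v).isCompact, (hT.fixedPoint _ v).nonempty⟩, hfix⟩, ?_⟩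
  rintro K ⟨hK, hKfix⟩
  let K' : ∀ v, NonemptyCompacts (M v) := fun v => ⟨⟨K v, (hK v).1⟩, (hK v).2⟩
  have hK' : K' = hT.fixedPoint _ :=
    hT.fixedPoint_unique ((isFixedPt_hutchinsonMap_iff F _ hin).2 hKfix)
  funext v
  exact congrArg (fun K : ∀ v, NonemptyCompacts (M v) => (K v : Set (M v))) hK'
end
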